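/- arXiv:2502.10469 — 3 statements merged into one kernel-verified Lean document; each statement's English description precedes it below -/
import Mathlib

section
/- Let C(n,m) be the caterpillar obtained from a path on n ≥ 3 spine vertices by attaching exactly m ≥ 1 pendant leaves to each spine vertex. Then the sigma index of C(n,m) equals 2m³ + m(m+1)²(n−2) + 2. -/
open Finset

/-- Albertson irregularity index: sum over edges of |d(u) - d(v)|. -/
noncomputable def irr {V : Type*} [Fintype V] (G : SimpleGraph V) : ℝ :=
  letI := Classical.decEq V
  letI := Classical.decRel G.Adj
  ∑ e ∈ G.edgeFinset,
    Sym2.lift ⟨fun u v => |(G.degree u : ℝ) - (G.degree v : ℝ)|,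
      fun u v => by simp [abs_sub_comm]⟩ e

/-- Sigma index: sum over edges of (d(u) - d(v))². -/
noncomputable def sigmaIdx {V : Type*} [Fintype V] (G : SimpleGraph V) : ℝ :=
  letI := Classical.decEq V
  letI := Classical.decRel G.Adj
  ∑ e ∈ G.edgeFinset,
    Sym2.lift ⟨fun u v => ((G.degree u : ℝ) - (G.degree v : ℝ)) ^ 2,
      fun u v => by ring⟩ e

/-- The caterpillar C(n,m): a path on `n` spine vertices `(i, 0)`, each spine vertex
having `m` pendant leaves `(i, j)` for `j ≠ 0`. -/
def caterpillar (n m : ℕ) : SimpleGraph (Fin n × Fin (m + 1)) :=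
  SimpleGraph.fromRel (fun a b =>
    (a.2 = 0 ∧ b.2 = 0 ∧ a.1.val + 1 = b.1.val) ∨ (a.1 = b.1 ∧ a.2 = 0 ∧ b.2 ≠ 0))

/-!
Orient each spine edge from `(i, 0)` to `(i + 1, 0)` and each leaf edge from the spine to the leaf,
so that summing over ordered pairs counts every edge once. Leaves have degree `1`, and spine
vertex `i` has degree `m` plus its number of spine neighbours, i.e. `m + 1` at the two ends and
`m + 2` inside. The `m` leaf edges at `i` contribute `m (d_i - 1)²`, giving `2m³ + m(m+1)²(n-2)`;
along the spine only the first and last edges join vertices of different degree, adding `1 + 1`.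
-/

open SimpleGraph

theorem SimpleGraph.sum_edgeFinset_eq_sum_of_orientation {V M : Type*} [Fintype V]
    [DecidableEq V] [AddCommMonoid M] {G : SimpleGraph V} [DecidableRel G.Adj]
    (r : V → V → Prop) [DecidableRel r] (hr : ∀ a b, r a b → ¬ r b a)
    (hG : ∀ a b, G.Adj a b ↔ r a b ∨ r b a) (f : Sym2 V → M) :
    ∑ e ∈ G.edgeFinset, f e = ∑ a, ∑ b, if r a b then f s(a, b) else 0 := by
  have hedge : G.edgeFinset =
      (univ.filter fun p : V × V => r p.1 p.2).image fun p => s(p.1, p.2) := by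
    ext e
    induction e with | h a b => ?_
    simp only [mem_edgeFinset, mem_edgeSet, hG, mem_image, mem_filter, mem_univ, true_and,
      Prod.exists, Sym2.eq_iff]
    constructor
    · rintro (hab | hba)
      · exact ⟨a, b, hab, .inl ⟨rfl, rfl⟩⟩
      · exact ⟨b, a, hba, .inr ⟨rfl, rfl⟩⟩
    · rintro ⟨c, d, hcd, ⟨rfl, rfl⟩ | ⟨rfl, rfl⟩⟩
      exacts [.inl hcd, .inr hcd]
  have hinj : Set.InjOn (fun p : V × V => s(p.1, p.2))
      (univ.filter fun p : V × V => r p.1 p.2) := by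
    rintro ⟨a, b⟩ hab ⟨c, d⟩ hcd he
    simp only [coe_filter, mem_univ, true_and, Sym2.eq_iff] at hab hcd he
    rcases he with ⟨rfl, rfl⟩ | ⟨rfl, rfl⟩
    · rfl
    · exact absurd hcd (hr _ _ hab)
  rw [hedge, sum_image hinj, sum_filter, Fintype.sum_prod_type]

theorem sum_fin_sum_fin_ite_succ_eq {M : Type*} [AddCommMonoid M] (n : ℕ)
    (g : ℕ → ℕ → M) :
    ∑ i : Fin n, ∑ k : Fin n, (if i.val + 1 = k.val then g i k else 0) =
      ∑ i ∈ range (n - 1), g i (i + 1) := by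
  have inner (i : ℕ) : ∑ k : Fin n, (if i + 1 = k.val then g i k else 0) =
      if i + 1 < n then g i (i + 1) else 0 := by
    rw [Fin.sum_univ_eq_sum_range (fun k => if i + 1 = k then g i k else 0), sum_ite_eq]
    simp only [mem_range]
  simp only [inner]
  rw [Fin.sum_univ_eq_sum_range (fun i => if i + 1 < n then g i (i + 1) else 0), ← sum_filter]
  congr 1
  ext i
  simp only [mem_filter, mem_range]
  omega

theorem card_fin_filter_succ_eq_or_eq_succ {n i : ℕ} (hi : i < n) :
    #{k : Fin n | k.val + 1 = i ∨ i + 1 = k.val} =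
      (if i = 0 then 0 else 1) + (if i + 1 = n then 0 else 1) := by
  rw [card_filter, Fin.sum_univ_eq_sum_range (fun k => if k + 1 = i ∨ i + 1 = k then 1 else 0)]
  have hsplit : ∀ k, (if k + 1 = i ∨ i + 1 = k then 1 else 0) =
      (if k = i - 1 then (if i = 0 then 0 else 1) else 0) + (if k = i + 1 then 1 else 0) := by
    intro k
    split_ifs <;> omega
  simp only [hsplit, sum_add_distrib, sum_ite_eq', mem_range]
  split_ifs <;> omega

def caterpillarSpineDegree (n m i : ℕ) : ℕ :=
  m + (if i = 0 then 0 else 1) + (if i + 1 = n then 0 else 1)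

theorem caterpillarSpineDegree_zero {n : ℕ} (m : ℕ) (hn : n ≠ 1) :
    caterpillarSpineDegree n m 0 = m + 1 := by
  simp [caterpillarSpineDegree, Ne.symm hn]

theorem caterpillarSpineDegree_of_succ_eq {n m i : ℕ} (hi : i ≠ 0) (h : i + 1 = n) :
    caterpillarSpineDegree n m i = m + 1 := by
  simp [caterpillarSpineDegree, hi, h]

theorem caterpillarSpineDegree_of_succ_ne {n m i : ℕ} (hi : i ≠ 0) (h : i + 1 ≠ n) :
    caterpillarSpineDegree n m i = m + 2 := by
  simp [caterpillarSpineDegree, hi, h]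

theorem caterpillar_adj {n m : ℕ} {i k : Fin n} {j l : Fin (m + 1)} :
    (caterpillar n m).Adj (i, j) (k, l) ↔
      j = 0 ∧ l = 0 ∧ (i.val + 1 = k.val ∨ k.val + 1 = i.val) ∨
      i = k ∧ (j = 0 ∧ l ≠ 0 ∨ j ≠ 0 ∧ l = 0) := by
  simp only [caterpillar, fromRel_adj, ne_eq, Prod.ext_iff, Fin.ext_iff]
  omega

theorem caterpillar_degree_leaf {n m : ℕ} (i : Fin n) {j : Fin (m + 1)} (hj : j ≠ 0)
    [Fintype ((caterpillar n m).neighborSet (i, j))] :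
    (caterpillar n m).degree (i, j) = 1 := by
  rw [← card_neighborFinset_eq_degree, card_eq_one]
  refine ⟨(i, 0), ?_⟩
  ext ⟨k, l⟩
  simp only [mem_neighborFinset, caterpillar_adj, mem_singleton, Prod.ext_iff]
  grind

theorem caterpillar_degree_spine {n m : ℕ} (i : Fin n)
    [Fintype ((caterpillar n m).neighborSet (i, 0))] :
    (caterpillar n m).degree (i, 0) = caterpillarSpineDegree n m i := by
  classical
  have hnbr : (caterpillar n m).neighborFinset (i, 0) =
      {i} ×ˢ (univ.erase 0 : Finset (Fin (m + 1))) ∪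
        (univ.filter fun k : Fin n => k.val + 1 = i ∨ i + 1 = k.val) ×ˢ {0} := by
    ext ⟨k, l⟩
    simp only [mem_neighborFinset, caterpillar_adj, mem_union, mem_product, mem_singleton,
      mem_erase, mem_univ, mem_filter]
    grind
  have hdisj : Disjoint (univ.erase 0 : Finset (Fin (m + 1))) {0} :=
    disjoint_singleton_right.2 (notMem_erase 0 univ)
  rw [← card_neighborFinset_eq_degree, hnbr,
    card_union_of_disjoint (disjoint_product.2 (.inr hdisj)), card_product, card_product,
    card_erase_of_mem (mem_univ _), card_fin_filter_succ_eq_or_eq_succ i.2]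
  simp only [card_singleton, card_univ, Fintype.card_fin, add_tsub_cancel_right, one_mul,
    mul_one, caterpillarSpineDegree]
  ring

theorem sigmaIdx_caterpillar_eq_sum (n m : ℕ) :
    sigmaIdx (caterpillar n m) =
      ∑ i ∈ range (n - 1),
          ((caterpillarSpineDegree n m i : ℝ) - caterpillarSpineDegree n m (i + 1)) ^ 2 +
        m * ∑ i ∈ range n, ((caterpillarSpineDegree n m i : ℝ) - 1) ^ 2 := by
  classical
  let r : Fin n × Fin (m + 1) → Fin n × Fin (m + 1) → Prop := fun a b =>
    a.2 = 0 ∧ (b.2 = 0 ∧ a.1.val + 1 = b.1.val ∨ a.1 = b.1 ∧ b.2 ≠ 0)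
  have hr : ∀ a b, r a b → ¬ r b a := by
    rintro ⟨i, j⟩ ⟨k, l⟩
    simp only [r, Fin.ext_iff]
    omega
  have hG : ∀ a b, (caterpillar n m).Adj a b ↔ r a b ∨ r b a := by
    rintro ⟨i, j⟩ ⟨k, l⟩
    simp only [r, caterpillar_adj]
    grind
  have hterm (i k : Fin n) (l : Fin (m + 1)) :
      (if r (i, 0) (k, l) then
        (((caterpillar n m).degree (i, 0) : ℝ) - (caterpillar n m).degree (k, l)) ^ 2 else 0) =
        if l = 0 then (if i.val + 1 = k.val then
          ((caterpillarSpineDegree n m i : ℝ) - caterpillarSpineDegree n m k) ^ 2 else 0)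
        else if i = k then ((caterpillarSpineDegree n m i : ℝ) - 1) ^ 2 else 0 := by
    rcases eq_or_ne l 0 with rfl | hl
    · simp [r, caterpillar_degree_spine]
    · by_cases hik : i = k <;>
        simp [r, hl, hik, caterpillar_degree_spine, caterpillar_degree_leaf]
  rw [sigmaIdx, sum_edgeFinset_eq_sum_of_orientation r hr hG]
  simp only [Sym2.lift_mk, Fintype.sum_prod_type]
  calc _ = ∑ i : Fin n, ∑ k : Fin n, ∑ l : Fin (m + 1), if r (i, 0) (k, l) then
          (((caterpillar n m).degree (i, 0) : ℝ) - (caterpillar n m).degree (k, l)) ^ 2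
          else 0 :=
        sum_congr rfl fun i _ => Fintype.sum_eq_single (0 : Fin (m + 1)) fun j hj => by
          simp [r, hj]
    _ = ∑ i : Fin n, ∑ k : Fin n, ((if i.val + 1 = k.val then
          ((caterpillarSpineDegree n m i : ℝ) - caterpillarSpineDegree n m k) ^ 2 else 0) +
          m * if i = k then ((caterpillarSpineDegree n m i : ℝ) - 1) ^ 2 else 0) := by
      simp only [hterm, Fin.sum_univ_succ, Fin.succ_ne_zero, if_true, if_false, sum_const,
        card_univ, Fintype.card_fin, nsmul_eq_mul]
    _ = _ := by
      rw [← sum_fin_sum_fin_ite_succ_eq n fun i k =>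
        ((caterpillarSpineDegree n m i : ℝ) - caterpillarSpineDegree n m k) ^ 2]
      simp only [sum_add_distrib, ← mul_sum, sum_ite_eq, mem_univ, if_true]
      rw [Fin.sum_univ_eq_sum_range (fun i => ((caterpillarSpineDegree n m i : ℝ) - 1) ^ 2)]

theorem sum_range_caterpillarSpineDegree_sub_succ_sq {n : ℕ} (m : ℕ) (hn : 3 ≤ n) :
    ∑ i ∈ range (n - 1),
      ((caterpillarSpineDegree n m i : ℝ) - caterpillarSpineDegree n m (i + 1)) ^ 2 = 2 := by
  obtain ⟨k, rfl⟩ : ∃ k, n = k + 3 := ⟨n - 3, by omega⟩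
  have hmid : ∀ i ∈ range k, caterpillarSpineDegree (k + 3) m (i + 1) =
      caterpillarSpineDegree (k + 3) m (i + 1 + 1) := by
    intro i hi
    rw [mem_range] at hi
    rw [caterpillarSpineDegree_of_succ_ne (by omega) (by omega),
      caterpillarSpineDegree_of_succ_ne (by omega) (by omega)]
  rw [show k + 3 - 1 = k + 1 + 1 by omega, sum_range_succ, sum_range_succ',
    sum_eq_zero fun i hi => by rw [hmid i hi, sub_self, zero_pow two_ne_zero],
    caterpillarSpineDegree_zero m (by omega),
    caterpillarSpineDegree_of_succ_ne (by omega) (by omega),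
    caterpillarSpineDegree_of_succ_ne (by omega) (by omega),
    caterpillarSpineDegree_of_succ_eq (by omega) (by omega)]
  push_cast
  ring

theorem sum_range_caterpillarSpineDegree_sub_one_sq {n : ℕ} (m : ℕ) (hn : 3 ≤ n) :
    ∑ i ∈ range n, ((caterpillarSpineDegree n m i : ℝ) - 1) ^ 2 =
      2 * (m : ℝ) ^ 2 + ((n : ℝ) - 2) * ((m : ℝ) + 1) ^ 2 := by
  obtain ⟨k, rfl⟩ : ∃ k, n = k + 3 := ⟨n - 3, by omega⟩
  have hmid : ∀ i ∈ range (k + 1), caterpillarSpineDegree (k + 3) m (i + 1) = m + 2 :=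
    fun i hi => caterpillarSpineDegree_of_succ_ne (by omega) (by rw [mem_range] at hi; omega)
  rw [sum_range_succ, sum_range_succ', sum_congr rfl fun i hi => by rw [hmid i hi], sum_const,
    card_range, nsmul_eq_mul, caterpillarSpineDegree_zero m (by omega),
    caterpillarSpineDegree_of_succ_eq (by omega) (by omega)]
  push_cast
  ring

theorem sigma_caterpillar_general (n m : ℕ) (hn : 3 ≤ n) :
    sigmaIdx (caterpillar n m) =
      2 * (m : ℝ) ^ 3 + (m : ℝ) * ((m : ℝ) + 1) ^ 2 * ((n : ℝ) - 2) + 2 := by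
  rw [sigmaIdx_caterpillar_eq_sum, sum_range_caterpillarSpineDegree_sub_succ_sq m hn,
    sum_range_caterpillarSpineDegree_sub_one_sq m hn]
  ring

theorem sigma_caterpillar (n m : ℕ) (hn : 3 ≤ n) (hm : 1 ≤ m) :
    sigmaIdx (caterpillar n m) =
      2 * (m : ℝ) ^ 3 + (m : ℝ) * ((m : ℝ) + 1) ^ 2 * ((n : ℝ) - 2) + 2 :=
  sigma_caterpillar_general n m hn
end

section
/- Let G be a simple connected graph with m edges, maximum degree Δ and minimum degree δ ≥ 1. Then irr(G) ≤ ((Δ − δ)/√(Δδ)) · √( m · Σ_{uv ∈ E(G)} d(u)d(v) ). -/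
open Finset

/-- Sum over edges of d(u)·d(v). -/
noncomputable def degProdSum {V : Type*} [Fintype V] (G : SimpleGraph V) : ℝ :=
  letI := Classical.decEq V
  letI := Classical.decRel G.Adj
  ∑ e ∈ G.edgeFinset,
    Sym2.lift ⟨fun u v => (G.degree u : ℝ) * (G.degree v : ℝ),
      fun u v => by simp [mul_comm]⟩ e

/-- Degree is independent of the `Fintype` instance on the neighbor set. -/
lemma degree_congr' {V : Type*} [Fintype V] (G : SimpleGraph V) (v : V)
    (i1 i2 : Fintype (G.neighborSet v)) :
    @SimpleGraph.degree _ G v i1 = @SimpleGraph.degree _ G v i2 := by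
  congr!

/-- Pointwise inequality: `|a - b| ≤ (D - d)/√(Dd) · √(ab)` for `d ≤ a, b ≤ D`. -/
lemma key_ineq' (D d a b : ℝ) (hd : 0 < d) (ha1 : d ≤ a) (ha2 : a ≤ D) (hb1 : d ≤ b)
    (hb2 : b ≤ D) :
    |a - b| ≤ (D - d) / Real.sqrt (D * d) * Real.sqrt (a * b) := by
  have hD : 0 < D := lt_of_lt_of_le hd (ha1.trans ha2)
  have hs : 0 < Real.sqrt (D * d) := Real.sqrt_pos.2 (by positivity)
  rw [div_mul_eq_mul_div, le_div_iff₀ hs]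
  have e1 : Real.sqrt (D * d) ^ 2 = D * d := Real.sq_sqrt (mul_nonneg hD.le hd.le)
  have e2 : Real.sqrt (a * b) ^ 2 = a * b := Real.sq_sqrt (mul_nonneg (hd.trans_le ha1).le (hd.trans_le hb1).le)
  have hfac : 0 ≤ (a * D - b * d) * (b * D - a * d) := by
    apply mul_nonneg <;> nlinarith
  have h1 : (|a - b| * Real.sqrt (D * d)) ^ 2 ≤ ((D - d) * Real.sqrt (a * b)) ^ 2 := by
    rw [mul_pow, mul_pow, e1, e2, sq_abs]
    nlinarith
  have h2 : 0 ≤ (D - d) * Real.sqrt (a * b) :=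
    mul_nonneg (by linarith) (Real.sqrt_nonneg _)
  nlinarith [mul_nonneg (abs_nonneg (a - b)) hs.le]

/-- Cauchy–Schwarz style summation lemma. -/
lemma sum_aux' {α : Type*} (E : Finset α) (f g : α → ℝ) (C : ℝ) (hC : 0 ≤ C)
    (hg : ∀ e ∈ E, 0 ≤ g e) (h : ∀ e ∈ E, f e ≤ C * Real.sqrt (g e)) :
    ∑ e ∈ E, f e ≤ C * Real.sqrt ((E.card : ℝ) * ∑ e ∈ E, g e) := by
  calc ∑ e ∈ E, f e ≤ ∑ e ∈ E, C * Real.sqrt (g e) := Finset.sum_le_sum h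
    _ = C * ∑ e ∈ E, Real.sqrt (g e) := by rw [Finset.mul_sum]
    _ ≤ C * Real.sqrt ((E.card : ℝ) * ∑ e ∈ E, g e) := by
        apply mul_le_mul_of_nonneg_left _ hC
        have h0 : 0 ≤ ∑ e ∈ E, Real.sqrt (g e) :=
          Finset.sum_nonneg fun e _ => Real.sqrt_nonneg _
        calc ∑ e ∈ E, Real.sqrt (g e)
            = Real.sqrt ((∑ e ∈ E, Real.sqrt (g e)) ^ 2) := (Real.sqrt_sq h0).symm
          _ ≤ Real.sqrt ((E.card : ℝ) * ∑ e ∈ E, g e) := by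
              apply Real.sqrt_le_sqrt
              calc (∑ e ∈ E, Real.sqrt (g e)) ^ 2
                  ≤ (E.card : ℝ) * ∑ e ∈ E, Real.sqrt (g e) ^ 2 :=
                    sq_sum_le_card_mul_sum_sq
                _ = (E.card : ℝ) * ∑ e ∈ E, g e := by
                    congr 1
                    exact Finset.sum_congr rfl fun e he => Real.sq_sqrt (hg e he)

theorem irr_le_degree_bound {V : Type*} [Fintype V] (G : SimpleGraph V)
    [DecidableRel G.Adj] (hconn : G.Connected) (hδ : 1 ≤ G.minDegree) :
    irr G ≤ ((G.maxDegree : ℝ) - (G.minDegree : ℝ)) /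
        Real.sqrt ((G.maxDegree : ℝ) * (G.minDegree : ℝ)) *
      Real.sqrt ((G.edgeSet.ncard : ℝ) * degProdSum G) := by
  classical
  obtain ⟨v0⟩ := hconn.nonempty
  have hd1 : (1 : ℝ) ≤ (G.minDegree : ℝ) := by exact_mod_cast hδ
  have hdpos : (0 : ℝ) < (G.minDegree : ℝ) := by linarith
  have hDd : (G.minDegree : ℝ) ≤ (G.maxDegree : ℝ) := by
    exact_mod_cast (G.minDegree_le_degree v0).trans (G.degree_le_maxDegree v0)
  have hC0 : 0 ≤ ((G.maxDegree : ℝ) - (G.minDegree : ℝ)) /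
      Real.sqrt ((G.maxDegree : ℝ) * (G.minDegree : ℝ)) :=
    div_nonneg (by linarith) (Real.sqrt_nonneg _)
  have hdb : ∀ w : V, ∀ i : Fintype (G.neighborSet w),
      (G.minDegree : ℝ) ≤ ((@SimpleGraph.degree _ G w i : ℕ) : ℝ) ∧
      ((@SimpleGraph.degree _ G w i : ℕ) : ℝ) ≤ (G.maxDegree : ℝ) := by
    intro w i
    rw [degree_congr' G w i (SimpleGraph.neighborSetFintype G w)]
    exact ⟨by exact_mod_cast G.minDegree_le_degree w,
      by exact_mod_cast G.degree_le_maxDegree w⟩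
  unfold irr degProdSum
  set E := (letI := Classical.decEq V; letI := Classical.decRel G.Adj; G.edgeFinset)
    with hE
  have hcard : (G.edgeSet.ncard : ℝ) = (E.card : ℝ) := by
    rw [hE]
    norm_cast
    rw [← Set.ncard_coe_finset]
    congr 1
    ext e
    simp [SimpleGraph.mem_edgeFinset]
  rw [hcard]
  apply sum_aux' E _ _ _ hC0
  · intro e he
    revert he
    induction e using Sym2.ind with
    | _ u v =>
      intro he
      simp only [Sym2.lift_mk]
      positivity
  · intro e he
    have heS : e ∈ G.edgeSet := by
      rw [hE] at he
      simpa [SimpleGraph.mem_edgeFinset] using he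
    revert heS
    induction e using Sym2.ind with
    | _ u v =>
      intro heS
      simp only [Sym2.lift_mk]
      exact key_ineq' _ _ _ _ hdpos (hdb u _).1 (hdb u _).2 (hdb v _).1 (hdb v _).2
end

section
/- Let G be a stepwise irregular graph on n vertices, i.e., |d(u) − d(v)| = 1 for every edge uv of G. Then the maximum degree satisfies Δ(G) ≤ ⌊(n+1)/2⌋. -/
open Finset

/-!
Along every edge the degree changes parity, so a triangle would need an odd number of
parity changes around a closed walk of length three, which is impossible. Hence the
neighbourhoods of the two ends of an edge `uv` are disjoint, giving
`d(u) + d(v) ≤ n`; taking `d(v) = Δ` and `d(u) ≥ Δ - 1` yields `2Δ - 1 ≤ n`.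
-/

namespace SimpleGraph

variable {V : Type*} [Fintype V] (G : SimpleGraph V) [DecidableRel G.Adj]

lemma disjoint_neighborFinset_of_adj
    (hpar : ∀ u v, G.Adj u v → Odd (G.degree u + G.degree v)) {u v : V} (huv : G.Adj u v) :
    Disjoint (G.neighborFinset u) (G.neighborFinset v) := by
  rw [Finset.disjoint_left]
  intro w hwu hwv
  rw [mem_neighborFinset] at hwu hwv
  have h₁ := hpar u v huv
  have h₂ := hpar u w hwu
  have h₃ := hpar v w hwv
  rw [Nat.odd_iff] at h₁ h₂ h₃
  omega

lemma degree_add_degree_le_card_of_disjoint {u v : V}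
    (h : Disjoint (G.neighborFinset u) (G.neighborFinset v)) :
    G.degree u + G.degree v ≤ Fintype.card V := by
  classical
  rw [← card_neighborFinset_eq_degree, ← card_neighborFinset_eq_degree,
    ← card_union_of_disjoint h]
  exact card_le_univ _

end SimpleGraph

theorem stepwise_irregular_maxDegree {V : Type*} [Fintype V] (G : SimpleGraph V)
    [DecidableRel G.Adj]
    (hstep : ∀ u v, G.Adj u v → |(G.degree u : ℤ) - (G.degree v : ℤ)| = 1) :
    G.maxDegree ≤ (Fintype.card V + 1) / 2 := by
  have hpar : ∀ u v, G.Adj u v → Odd (G.degree u + G.degree v) := fun u v huv => by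
    have h := hstep u v huv
    rw [abs_eq zero_le_one] at h
    rw [Nat.odd_iff]
    omega
  refine G.maxDegree_le_of_forall_degree_le _ fun v => ?_
  rcases (G.degree v).eq_zero_or_pos with hv | hv
  · omega
  obtain ⟨u, hvu⟩ := G.degree_pos_iff_exists_adj v |>.mp hv
  have hsum := G.degree_add_degree_le_card_of_disjoint (G.disjoint_neighborFinset_of_adj hpar hvu)
  have hdeg := hstep v u hvu
  rw [abs_eq zero_le_one] at hdeg
  omega
end
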